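/- Ties force full extraction: let v* = max_l v_l and suppose at least two leaves attain the value v*. Let s be the least common ancestor of all leaves l with v_l = v*. Then in any fixed point of the tree bargaining equations, x_t = 1 for every proper descendant t of s (that is, the share equals 1 on every edge in the subtree rooted at s), and consequently w_s = v*. -/

import Mathlib

/-- A finite rooted tree, given by a parent function: the root is its own
parent, and every node reaches the root by iterating `parent`. -/
structure BTree where
  V : Type
  [instFintype : Fintype V]
  [instDecEq : DecidableEq V]
  root : V
  parent : V → V
  parent_root : parent root = root
  reaches_root : ∀ t : V, ∃ k : ℕ, parent^[k] t = root

attribute [instance] BTree.instFintype BTree.instDecEq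

/-- The children of a node `s`: the non-root nodes whose parent is `s`. -/
def BTree.children (T : BTree) (s : T.V) : Finset T.V :=
  Finset.univ.filter fun t => t ≠ T.root ∧ T.parent t = s

/-- A leaf is a node with no children. -/
def BTree.IsLeaf (T : BTree) (l : T.V) : Prop :=
  T.children l = ∅

/-- Maximum of `f` over a finite set `F`, with value `0` when `F` is empty. -/
noncomputable def fmax {α : Type*} (F : Finset α) (f : α → ℝ) : ℝ :=
  sSup (insert 0 (f '' (F : Set α)))

/-- `w` is the value function determined by leaf values `v` and shares `x`:
`w l = v l` at each leaf `l`, and `w s = max_{t ∈ children s} x t · w t` at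
each internal node `s`. -/
def IsValueFn (T : BTree) (v x w : T.V → ℝ) : Prop :=
  (∀ l, T.IsLeaf l → w l = v l) ∧
  ∀ s, ¬ T.IsLeaf s → w s = fmax (T.children s) fun t => x t * w t

/-- `wexcl T x w s t`: the maximum value reaching `s` from its children other
than `t` (`0` when `t` is the only child). -/
noncomputable def wexcl (T : BTree) (x w : T.V → ℝ) (s t : T.V) : ℝ :=
  fmax ((T.children s).erase t) fun t' => x t' * w t'

/-- A fixed point of the tree bargaining equations: `x` is a share vector
(`x root = 0`, `x t ∈ [0,1]` off the root), `w` is the induced value function,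
and for every non-root `t` with parent `s`:
`(1 − x t)·w t = (1 − x s)·(max(w_{s∖t}, x t · w t) − w_{s∖t})`. -/
def IsTreeFixedPoint (T : BTree) (v x w : T.V → ℝ) : Prop :=
  IsValueFn T v x w ∧
  x T.root = 0 ∧
  (∀ t, t ≠ T.root → 0 ≤ x t ∧ x t ≤ 1) ∧
  ∀ t, t ≠ T.root →
    (1 - x t) * w t =
      (1 - x (T.parent t)) *
        (max (wexcl T x w (T.parent t) t) (x t * w t) - wexcl T x w (T.parent t) t)

/-!
At a fixed point every value `w t` is positive, and the equation at a non-root `t` with parent `s`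
says that `x t = 1` as soon as `x t · w t ≤ w_{s∖t}` or `x s = 1`; so a share `1` propagates down
the whole subtree. Below the least common ancestor `s` of the maximum leaves there are two children
`c₁ ≠ c₂` of `s` carrying a maximum leaf. The weaker of the two is dominated, hence extracts
fully, and so does everything below it; its value is then `v*`, which dominates every other child
of `s` in turn.
-/

theorem le_fmax {α : Type*} {F : Finset α} (f : α → ℝ) {a : α} (ha : a ∈ F) :
    f a ≤ fmax F f :=
  le_csSup (((F.finite_toSet).image f).insert 0).bddAbove
    (Set.mem_insert_iff.2 (Or.inr ⟨a, Finset.mem_coe.2 ha, rfl⟩))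

theorem fmax_nonneg {α : Type*} (F : Finset α) (f : α → ℝ) : 0 ≤ fmax F f :=
  le_csSup (((F.finite_toSet).image f).insert 0).bddAbove (Set.mem_insert 0 _)

theorem fmax_le {α : Type*} {F : Finset α} {f : α → ℝ} {B : ℝ} (hB : 0 ≤ B)
    (h : ∀ a ∈ F, f a ≤ B) : fmax F f ≤ B := by
  refine csSup_le (Set.insert_nonempty _ _) ?_
  rintro y (rfl | ⟨a, ha, rfl⟩)
  · exact hB
  · exact h a (Finset.mem_coe.1 ha)

namespace BTree

variable (T : BTree)

def IsDescendant (t a : T.V) : Prop := ∃ k : ℕ, T.parent^[k] t = a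

theorem mem_children_iff {c s : T.V} : c ∈ T.children s ↔ c ≠ T.root ∧ T.parent c = s := by
  simp [children]

theorem mem_children_parent {t : T.V} (ht : t ≠ T.root) : t ∈ T.children (T.parent t) :=
  T.mem_children_iff.2 ⟨ht, rfl⟩

theorem not_isLeaf_of_mem_children {c s : T.V} (h : c ∈ T.children s) : ¬ T.IsLeaf s := by
  intro hs
  rw [IsLeaf] at hs
  simp [hs] at h

theorem iterate_parent_root (k : ℕ) : T.parent^[k] T.root = T.root :=
  Function.iterate_fixed T.parent_root k

theorem ne_root_of_iterate_succ_eq {t a : T.V} {k : ℕ} (h : T.parent^[k + 1] t = a)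
    (ha : a ≠ T.root) : t ≠ T.root := by
  rintro rfl
  exact ha (h ▸ T.iterate_parent_root _)

theorem exists_mem_children_isDescendant {t a : T.V} (hta : t ≠ a) (h : T.IsDescendant t a) :
    ∃ d ∈ T.children a, T.IsDescendant t d := by
  obtain ⟨k, hk⟩ := h
  induction k with
  | zero => exact absurd hk hta
  | succ k ih =>
    rw [Function.iterate_succ_apply'] at hk
    by_cases hd : T.parent^[k] t = T.root
    · exact ih (by rw [← hk, hd, T.parent_root])
    · exact ⟨_, T.mem_children_iff.2 ⟨hd, hk⟩, k, rfl⟩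

noncomputable def depth (t : T.V) : ℕ := Nat.find (T.reaches_root t)

theorem depth_lt_of_mem_children {c s : T.V} (h : c ∈ T.children s) : T.depth s < T.depth c := by
  obtain ⟨hc, rfl⟩ := T.mem_children_iff.1 h
  obtain ⟨n, hn⟩ : ∃ n, T.depth c = n + 1 :=
    Nat.exists_eq_succ_of_ne_zero (by simpa [depth, Nat.find_eq_zero] using hc)
  have hroot : T.parent^[n] (T.parent c) = T.root := by
    rw [← Function.iterate_succ_apply, Nat.succ_eq_add_one, ← hn]
    exact Nat.find_spec (T.reaches_root c)
  exact hn ▸ Nat.lt_succ_of_le (Nat.find_min' _ hroot)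

theorem depth_parent_le (t : T.V) : T.depth (T.parent t) ≤ T.depth t := by
  by_cases ht : t = T.root
  · rw [ht, T.parent_root]
  · exact (T.depth_lt_of_mem_children (T.mem_children_parent ht)).le

theorem depth_le_of_isDescendant {t a : T.V} (h : T.IsDescendant t a) :
    T.depth a ≤ T.depth t := by
  obtain ⟨k, rfl⟩ := h
  induction k with
  | zero => rfl
  | succ k ih => exact (Function.iterate_succ_apply' T.parent k t ▸ T.depth_parent_le _).trans ih

theorem not_isDescendant_of_mem_children {c s : T.V} (h : c ∈ T.children s) :
    ¬ T.IsDescendant s c :=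
  fun hd => (T.depth_le_of_isDescendant hd).not_gt (T.depth_lt_of_mem_children h)

theorem wellFounded_mem_children : WellFounded fun c s => c ∈ T.children s :=
  (Finite.wellFounded_of_trans_of_irrefl fun c s : T.V => T.depth s < T.depth c).mono
    fun _ _ => T.depth_lt_of_mem_children

theorem exists_two_children_of_isLCA {P : T.V → Prop} (hP : ∀ l, P l → T.IsLeaf l)
    {l₁ l₂ : T.V} (hne : l₁ ≠ l₂) (h₁ : P l₁) (h₂ : P l₂) {s : T.V}
    (hanc : ∀ l, P l → T.IsDescendant l s)
    (hlca : ∀ a, (∀ l, P l → T.IsDescendant l a) → T.IsDescendant s a) :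
    ∃ c₁ ∈ T.children s, ∃ c₂ ∈ T.children s, c₁ ≠ c₂ ∧
      (∃ l, P l ∧ T.IsDescendant l c₁) ∧ ∃ l, P l ∧ T.IsDescendant l c₂ := by
  obtain ⟨l, hl, hls⟩ : ∃ l, P l ∧ l ≠ s := by
    by_cases h : l₁ = s
    · exact ⟨l₂, h₂, fun h' => hne (h.trans h'.symm)⟩
    · exact ⟨l₁, h₁, h⟩
  obtain ⟨c₁, hc₁, hlc₁⟩ := T.exists_mem_children_isDescendant hls (hanc l hl)
  obtain ⟨l', hl', hl'c₁⟩ : ∃ l', P l' ∧ ¬ T.IsDescendant l' c₁ := by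
    by_contra! h
    exact T.not_isDescendant_of_mem_children hc₁ (hlca c₁ h)
  have hl's : l' ≠ s := fun h => T.not_isLeaf_of_mem_children hc₁ (h ▸ hP l' hl')
  obtain ⟨c₂, hc₂, hl'c₂⟩ := T.exists_mem_children_isDescendant hl's (hanc l' hl')
  exact ⟨c₁, hc₁, c₂, hc₂, fun h => hl'c₁ (h ▸ hl'c₂), ⟨l, hl, hlc₁⟩, l', hl', hl'c₂⟩

end BTree

theorem le_wexcl (T : BTree) (x w : T.V → ℝ) {s t c : T.V} (hc : c ∈ T.children s)
    (hct : c ≠ t) : x c * w c ≤ wexcl T x w s t :=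
  le_fmax (fun t' => x t' * w t') (Finset.mem_erase.2 ⟨hct, hc⟩)

theorem wexcl_nonneg (T : BTree) (x w : T.V → ℝ) (s t : T.V) : 0 ≤ wexcl T x w s t :=
  fmax_nonneg _ _

section

variable {T : BTree} {v x w : T.V → ℝ}

theorem IsValueFn.mul_le_parent (hw : IsValueFn T v x w) {t : T.V} (ht : t ≠ T.root) :
    x t * w t ≤ w (T.parent t) := by
  have hmem := T.mem_children_parent ht
  rw [hw.2 _ (T.not_isLeaf_of_mem_children hmem)]
  exact le_fmax (fun t' => x t' * w t') hmem

namespace IsTreeFixedPoint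

theorem eq_one_of_le_wexcl (hfp : IsTreeFixedPoint T v x w) {t : T.V} (ht : t ≠ T.root)
    (hwt : w t ≠ 0) (hdom : x t * w t ≤ wexcl T x w (T.parent t) t) : x t = 1 := by
  have heq := hfp.2.2.2 t ht
  rw [max_eq_left hdom, sub_self, mul_zero, mul_eq_zero, sub_eq_zero] at heq
  exact (heq.resolve_right hwt).symm

theorem eq_one_of_parent_eq_one (hfp : IsTreeFixedPoint T v x w) {t : T.V} (ht : t ≠ T.root)
    (hwt : w t ≠ 0) (hxp : x (T.parent t) = 1) : x t = 1 := by
  have heq := hfp.2.2.2 t ht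
  rw [hxp, sub_self, zero_mul, mul_eq_zero, sub_eq_zero] at heq
  exact (heq.resolve_right hwt).symm

theorem pos (hfp : IsTreeFixedPoint T v x w) (hv : ∀ l, T.IsLeaf l → 0 < v l) (t : T.V) :
    0 < w t := by
  induction t using T.wellFounded_mem_children.induction with
  | _ t ih =>
  by_cases ht : T.IsLeaf t
  · exact hfp.1.1 t ht ▸ hv t ht
  obtain ⟨c, hc⟩ := Finset.nonempty_iff_ne_empty.2 ht
  obtain ⟨hcr, rfl⟩ := T.mem_children_iff.1 hc
  -- a zero share would make the left side of the equation at `c` vanish, but not `w c`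
  have hxc : 0 < x c := by
    refine (hfp.2.2.1 c hcr).1.lt_of_ne' fun hx0 => (ih c hc).ne' ?_
    have heq := hfp.2.2.2 c hcr
    rwa [hx0, zero_mul, max_eq_left (wexcl_nonneg ..), sub_self, mul_zero, sub_zero,
      one_mul] at heq
  exact (mul_pos hxc (ih c hc)).trans_le (hfp.1.mul_le_parent hcr)

theorem mul_le_self (hfp : IsTreeFixedPoint T v x w) (hv : ∀ l, T.IsLeaf l → 0 < v l)
    (t : T.V) : x t * w t ≤ w t := by
  by_cases ht : t = T.root
  · rw [ht, hfp.2.1, zero_mul]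
    exact (hfp.pos hv _).le
  · exact mul_le_of_le_one_left (hfp.pos hv t).le (hfp.2.2.1 t ht).2

theorem le_of_forall_isLeaf_le (hfp : IsTreeFixedPoint T v x w)
    (hv : ∀ l, T.IsLeaf l → 0 < v l) {B : ℝ} (hB : ∀ l, T.IsLeaf l → v l ≤ B) (t : T.V) :
    w t ≤ B := by
  induction t using T.wellFounded_mem_children.induction with
  | _ t ih =>
  by_cases ht : T.IsLeaf t
  · exact hfp.1.1 t ht ▸ hB t ht
  obtain ⟨c, hc⟩ := Finset.nonempty_iff_ne_empty.2 ht
  rw [hfp.1.2 t ht]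
  exact fmax_le ((hfp.pos hv c).le.trans (ih c hc)) fun d hd =>
    (hfp.mul_le_self hv d).trans (ih d hd)

theorem eq_one_of_isDescendant (hfp : IsTreeFixedPoint T v x w)
    (hv : ∀ l, T.IsLeaf l → 0 < v l) {t a : T.V} (ha : a ≠ T.root) (hxa : x a = 1)
    (h : T.IsDescendant t a) : x t = 1 := by
  obtain ⟨k, hk⟩ := h
  induction k generalizing t with
  | zero =>
    obtain rfl : t = a := hk
    exact hxa
  | succ k ih =>
    have ht := T.ne_root_of_iterate_succ_eq hk ha
    exact hfp.eq_one_of_parent_eq_one ht (hfp.pos hv t).ne' (ih hk)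

theorem le_of_isDescendant (hfp : IsTreeFixedPoint T v x w) (hv : ∀ l, T.IsLeaf l → 0 < v l)
    {t a : T.V} (ha : a ≠ T.root) (hxa : x a = 1) (h : T.IsDescendant t a) : w t ≤ w a := by
  obtain ⟨k, hk⟩ := h
  induction k generalizing t with
  | zero =>
    obtain rfl : t = a := hk
    exact le_rfl
  | succ k ih =>
    have ht := T.ne_root_of_iterate_succ_eq hk ha
    calc w t = x t * w t := by rw [hfp.eq_one_of_isDescendant hv ha hxa ⟨k + 1, hk⟩, one_mul]
      _ ≤ w (T.parent t) := hfp.1.mul_le_parent ht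
      _ ≤ w a := ih hk

theorem forall_children_eq_one (hfp : IsTreeFixedPoint T v x w)
    (hv : ∀ l, T.IsLeaf l → 0 < v l) {B : ℝ} (hB : ∀ l, T.IsLeaf l → v l ≤ B)
    {s c l : T.V} (hc : c ∈ T.children s) (hl : T.IsLeaf l) (hvl : v l = B)
    (hlc : T.IsDescendant l c) (hdom : x c * w c ≤ wexcl T x w s c) :
    (∀ d ∈ T.children s, x d = 1) ∧ w s = B := by
  obtain ⟨hcr, rfl⟩ := T.mem_children_iff.1 hc
  have hxc : x c = 1 := hfp.eq_one_of_le_wexcl hcr (hfp.pos hv c).ne' hdom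
  have hwc : w c = B := le_antisymm (hfp.le_of_forall_isLeaf_le hv hB c)
    (hvl ▸ hfp.1.1 l hl ▸ hfp.le_of_isDescendant hv hcr hxc hlc)
  have hyc : x c * w c = B := by rw [hxc, hwc, one_mul]
  have hyle : ∀ d, x d * w d ≤ B := fun d =>
    (hfp.mul_le_self hv d).trans (hfp.le_of_forall_isLeaf_le hv hB d)
  refine ⟨fun d hd => ?_, ?_⟩
  · obtain ⟨hdr, hdp⟩ := T.mem_children_iff.1 hd
    by_cases hdc : d = c
    · exact hdc ▸ hxc
    refine hfp.eq_one_of_le_wexcl hdr (hfp.pos hv d).ne' ?_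
    exact hdp ▸ (hyle d).trans (hyc ▸ le_wexcl T x w hc (Ne.symm hdc))
  · rw [hfp.1.2 _ (T.not_isLeaf_of_mem_children hc)]
    exact le_antisymm (fmax_le (hwc ▸ (hfp.pos hv c).le) fun d _ => hyle d)
      (hyc ▸ le_fmax (fun t' => x t' * w t') hc)

end IsTreeFixedPoint

end

theorem tree_ties_full_extraction_general (T : BTree) (v x w : T.V → ℝ)
    (hv : ∀ l, T.IsLeaf l → 0 < v l)
    (hfp : IsTreeFixedPoint T v x w)
    (vstar : ℝ) (hmax : ∀ l, T.IsLeaf l → v l ≤ vstar)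
    (l1 l2 : T.V) (hne : l1 ≠ l2)
    (hl1 : T.IsLeaf l1) (hl2 : T.IsLeaf l2)
    (hv1 : v l1 = vstar) (hv2 : v l2 = vstar)
    (s : T.V)
    (hanc : ∀ l, T.IsLeaf l → v l = vstar → ∃ k : ℕ, T.parent^[k] l = s)
    (hlca : ∀ a, (∀ l, T.IsLeaf l → v l = vstar → ∃ k : ℕ, T.parent^[k] l = a) →
      ∃ k : ℕ, T.parent^[k] s = a) :
    (∀ t, t ≠ s → (∃ k : ℕ, T.parent^[k] t = s) → x t = 1) ∧ w s = vstar := by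
  obtain ⟨c₁, hc₁, c₂, hc₂, hc₁₂, ⟨m₁, ⟨hm₁, hvm₁⟩, hm₁c₁⟩, m₂, ⟨hm₂, hvm₂⟩, hm₂c₂⟩ :=
    T.exists_two_children_of_isLCA (P := fun l => T.IsLeaf l ∧ v l = vstar) (fun _ h => h.1)
      hne ⟨hl1, hv1⟩ ⟨hl2, hv2⟩ (fun l h => hanc l h.1 h.2)
      (fun a ha => hlca a fun l hl hvl => ha l ⟨hl, hvl⟩)
  have hs : (∀ d ∈ T.children s, x d = 1) ∧ w s = vstar := by
    rcases le_total (x c₁ * w c₁) (x c₂ * w c₂) with h | h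
    · exact hfp.forall_children_eq_one hv hmax hc₁ hm₁ hvm₁ hm₁c₁
        (h.trans (le_wexcl T x w hc₂ hc₁₂.symm))
    · exact hfp.forall_children_eq_one hv hmax hc₂ hm₂ hvm₂ hm₂c₂
        (h.trans (le_wexcl T x w hc₁ hc₁₂))
  refine ⟨fun t hts hst => ?_, hs.2⟩
  obtain ⟨d, hd, htd⟩ := T.exists_mem_children_isDescendant hts hst
  exact hfp.eq_one_of_isDescendant hv (T.mem_children_iff.1 hd).1 (hs.1 d hd) htd

/-- Ties force full extraction: if at least two leaves attain the maximum value
`vstar` and `s` is the least common ancestor of all maximum-value leaves, then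
in any fixed point every proper descendant of `s` has share `1`, and `w s = vstar`. -/
theorem tree_ties_full_extraction (T : BTree) (v x w : T.V → ℝ)
    (hv : ∀ l, T.IsLeaf l → 0 < v l) (hroot : ¬ T.IsLeaf T.root)
    (hfp : IsTreeFixedPoint T v x w)
    (vstar : ℝ) (hmax : ∀ l, T.IsLeaf l → v l ≤ vstar)
    (l1 l2 : T.V) (hne : l1 ≠ l2)
    (hl1 : T.IsLeaf l1) (hl2 : T.IsLeaf l2)
    (hv1 : v l1 = vstar) (hv2 : v l2 = vstar)
    (s : T.V)
    (hanc : ∀ l, T.IsLeaf l → v l = vstar → ∃ k : ℕ, T.parent^[k] l = s)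
    (hlca : ∀ a, (∀ l, T.IsLeaf l → v l = vstar → ∃ k : ℕ, T.parent^[k] l = a) →
      ∃ k : ℕ, T.parent^[k] s = a) :
    (∀ t, t ≠ s → (∃ k : ℕ, T.parent^[k] t = s) → x t = 1) ∧ w s = vstar :=
  tree_ties_full_extraction_general T v x w hv hfp vstar hmax l1 l2 hne hl1 hl2 hv1 hv2 s hanc hlca
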